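/- Let α > 0, β ≥ 9/8, and define a(x) = 1 + α(β − 1) + 3αx² and g(x) = αβ + 2αx². Then for every θ ∈ [−1, 1], one has a(θ) > 0 and −1 ≤ (−1 + θ·g(θ))/a(θ) and (1 + θ·g(θ))/a(θ) ≤ 1. -/
import Mathlib

theorem stmt_5 (α β : ℝ) (hα : 0 < α) (hβ : 9/8 ≤ β) :
    ∀ θ ∈ Set.Icc (-1 : ℝ) 1,
      0 < 1 + α*(β - 1) + 3*α*θ^2 ∧
      -1 ≤ (-1 + θ * (α*β + 2*α*θ^2)) / (1 + α*(β - 1) + 3*α*θ^2) ∧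
      (1 + θ * (α*β + 2*α*θ^2)) / (1 + α*(β - 1) + 3*α*θ^2) ≤ 1 := by
  rintro θ ⟨h1, h2⟩
  have ha : 0 < 1 + α*(β - 1) + 3*α*θ^2 := by nlinarith [sq_nonneg θ]
  refine ⟨ha, ?_, ?_⟩
  · rw [le_div_iff₀ ha]
    have key : 0 ≤ α * (1 + θ) * ((β - 9/8) + 2*(θ + 1/4)^2) :=
      mul_nonneg (mul_nonneg hα.le (by linarith)) (by nlinarith [sq_nonneg (θ + 1/4)])
    nlinarith [key]
  · rw [div_le_one ha]
    have key : 0 ≤ α * (1 - θ) * ((β - 9/8) + 2*(θ - 1/4)^2) :=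
      mul_nonneg (mul_nonneg hα.le (by linarith)) (by nlinarith [sq_nonneg (θ - 1/4)])
    nlinarith [key]
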